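/- Let 0 < γ < 2, 0 < r < ∞, let M : ℕ → ℝ be a strongly regular sequence, let d ≥ 1, and let a_1, …, a_d ∈ A_M(S_{γ,r}). Let h ∈ A^∞(S_{γ,r}) be flat (h^{(j)}(z) → 0 as z → 0 in S_{γ,r} for every j) and satisfy h(z)^d + a_1(z)·h(z)^{d-1} + ⋯ + a_d(z) = 0 for all z ∈ S_{γ,r}. Then there exist 0 < r'' ≤ r and positive constants c_1, c_2 such that |h(z)| ≤ c_1·h_M(c_2·|z|) for all z ∈ S_{γ,r''}. -/

import Mathlib

open Set Filter Topology Complex ENNReal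

noncomputable section

/-- The sector `S_{γ,r}` of the complex plane: `0 < |z| < r`, `|arg z| < γπ/2`. -/
def Sector (γ : ℝ) (r : ℝ≥0∞) : Set ℂ :=
  {z : ℂ | z ≠ 0 ∧ |Complex.arg z| < γ * Real.pi / 2 ∧ (‖z‖₊ : ℝ≥0∞) < r}

/-- `f ∈ A^∞(S_{γ,r})`: `f` is holomorphic on the sector and all its derivatives
are bounded there. -/
def AInfty (γ : ℝ) (r : ℝ≥0∞) (f : ℂ → ℂ) : Prop :=
  DifferentiableOn ℂ f (Sector γ r) ∧
  ∀ j : ℕ, ∃ B : ℝ, ∀ z ∈ Sector γ r, ‖iteratedDeriv j f z‖ ≤ B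

/-- `f ∈ A_M(S_{γ,r})`: `f ∈ A^∞(S_{γ,r})` with Denjoy–Carleman bounds. -/
def AClass (M : ℕ → ℝ) (γ : ℝ) (r : ℝ≥0∞) (f : ℂ → ℂ) : Prop :=
  AInfty γ r f ∧
  ∃ C > (0:ℝ), ∃ σ > (0:ℝ), ∀ (j : ℕ), ∀ z ∈ Sector γ r,
    ‖iteratedDeriv j f z‖ ≤ C * σ ^ j * (Nat.factorial j : ℝ) * M j

/-- `f` is flat on `S_{γ,r}`: every derivative tends to `0` at the vertex. -/
def FlatOn (γ : ℝ) (r : ℝ≥0∞) (f : ℂ → ℂ) : Prop :=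
  ∀ j : ℕ, Tendsto (iteratedDeriv j f) (𝓝[Sector γ r] 0) (𝓝 0)

/-- The function `h_M` associated with the sequence `M`. -/
def hFun (M : ℕ → ℝ) (t : ℝ) : ℝ := if t = 0 then 0 else ⨅ j : ℕ, t ^ j * M j

/-- `M` is a strongly regular sequence: positive, normalized, increasing,
log-convex, of moderate growth and strongly non-quasianalytic. -/
def StronglyRegular (M : ℕ → ℝ) : Prop :=
  (∀ j, 0 < M j) ∧ M 0 = 1 ∧ Monotone M ∧
  (∀ j : ℕ, (M (j+1))^2 ≤ M j * M (j+2)) ∧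
  (∃ A : ℝ, ∀ j k : ℕ, 1 ≤ j + k →
    (M (j+k) / (M j * M k)) ^ ((1:ℝ)/((j:ℝ)+(k:ℝ))) ≤ A) ∧
  (Summable (fun j : ℕ => M j / (((j:ℝ)+1) * M (j+1))) ∧
   ∃ A : ℝ, ∀ k : ℕ,
     M (k+1) / M k * ∑' j : ℕ, M (j+k) / (((j:ℝ)+(k:ℝ)+1) * M (j+k+1)) ≤ A)

/-!
Write the equation as `∑_{j ≤ d} c_j h^j = 0` with `c_d = 1`, and let `c_m` be the first
coefficient that is not flat. Derivatives of `A^∞` functions have limits at the vertex (a bounded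
derivative makes a function Lipschitz along polar paths in the sector), so some `c_m^{(k)}` tends
to `α ≠ 0` while the lower derivatives tend to `0`, and Taylor's formula gives
`|c_m(z)| ≥ c₀ |z|^k`; since `h` is flat, `c_m + c_{m+1} h + ⋯` obeys the same bound up to
`o(|z|^k)`. Taylor's formula also bounds the flat coefficients `c_j`, `j < m`, by `C h_M(σ|z|)`,
and the equation, read as `h^m (c_m + c_{m+1} h + ⋯) = -∑_{j<m} c_j h^j`, gives
`|h|^m c₀ |z|^k ≲ h_M(σ|z|)`. Moderate growth of `M` lets `h_M` absorb both the factor `|z|^{-k}`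
and the `m`-th root.
-/

open Asymptotics

section hFun

variable {M : ℕ → ℝ}

lemma hFun_le_pow_mul (hM : ∀ j, 0 < M j) {t : ℝ} (ht : 0 < t) (j : ℕ) :
    hFun M t ≤ t ^ j * M j := by
  rw [hFun, if_neg ht.ne']
  exact ciInf_le ⟨0, by rintro _ ⟨i, rfl⟩; have := hM i; positivity⟩ j

lemma le_mul_hFun {t x C : ℝ} (ht : 0 < t) (hC : 0 < C) (h : ∀ j, x ≤ C * (t ^ j * M j)) :
    x ≤ C * hFun M t := by
  rw [hFun, if_neg ht.ne', ← div_le_iff₀' hC]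
  exact le_ciInf fun j => (div_le_iff₀' hC).2 (h j)

lemma hFun_nonneg (hM : ∀ j, 0 < M j) {t : ℝ} (ht : 0 ≤ t) : 0 ≤ hFun M t := by
  rcases ht.eq_or_lt with rfl | ht
  · simp [hFun]
  · simpa using le_mul_hFun (M := M) (x := 0) ht one_pos fun j => by
      have := hM j
      positivity

lemma StronglyRegular.exists_moderateGrowth (hM : StronglyRegular M) :
    ∃ A : ℝ, 1 ≤ A ∧ ∀ j k : ℕ, M (j + k) ≤ A ^ (j + k) * (M j * M k) := by
  obtain ⟨hpos, hM0, -, -, ⟨A, hA⟩, -⟩ := hM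
  refine ⟨max A 1, le_max_right _ _, fun j k => ?_⟩
  rcases Nat.eq_zero_or_pos (j + k) with hjk | hjk
  · obtain ⟨rfl, rfl⟩ : j = 0 ∧ k = 0 := by omega
    simp [hM0]
  have hMjk : 0 < M j * M k := mul_pos (hpos j) (hpos k)
  have hn : (0 : ℝ) < (j : ℝ) + k := by exact_mod_cast hjk
  have hq := div_pos (hpos (j + k)) hMjk
  have h := Real.rpow_le_rpow (Real.rpow_nonneg hq.le _)
    ((hA j k hjk).trans (le_max_left A 1)) hn.le
  rw [← Real.rpow_mul hq.le, one_div, inv_mul_cancel₀ hn.ne', Real.rpow_one,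
    show (j : ℝ) + k = ((j + k : ℕ) : ℝ) by push_cast; ring, Real.rpow_natCast,
    div_le_iff₀ hMjk] at h
  exact h

section ModerateGrowth

variable {A : ℝ} (hA : ∀ j k : ℕ, M (j + k) ≤ A ^ (j + k) * (M j * M k))
include hA

lemma le_pow_mul_pow_of_moderateGrowth (hM : ∀ j, 0 < M j) (hA1 : 1 ≤ A) (m l : ℕ) :
    M ((m + 1) * l) ≤ A ^ ((m + 1) * (m + 1) * l) * M l ^ (m + 1) := by
  have hMl := (hM l).le
  induction m with
  | zero => simpa using le_mul_of_one_le_left hMl (one_le_pow₀ hA1)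
  | succ m ih =>
    calc M ((m + 2) * l) = M ((m + 1) * l + l) := by ring_nf
      _ ≤ A ^ ((m + 1) * l + l) * (M ((m + 1) * l) * M l) := hA _ _
      _ ≤ A ^ ((m + 1) * l + l) * (A ^ ((m + 1) * (m + 1) * l) * M l ^ (m + 1) * M l) := by
          gcongr
      _ = A ^ ((m + 1) * l + l + (m + 1) * (m + 1) * l) * M l ^ (m + 2) := by ring
      _ ≤ A ^ ((m + 2) * (m + 2) * l) * M l ^ (m + 2) :=
          mul_le_mul_of_nonneg_right (pow_le_pow_right₀ hA1 (by nlinarith)) (by positivity)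

lemma hFun_le_mul_hFun (hM : ∀ j, 0 < M j) (hA0 : 0 < A) {s : ℝ} (hs : 0 < s) (k : ℕ) :
    hFun M s ≤ A ^ k * M k * s ^ k * hFun M (A * s) := by
  have := hM k
  refine le_mul_hFun (by positivity) (by positivity) fun l => ?_
  calc hFun M s ≤ s ^ (k + l) * M (k + l) := hFun_le_pow_mul hM hs _
    _ ≤ s ^ (k + l) * (A ^ (k + l) * (M k * M l)) := by gcongr; exact hA k l
    _ = A ^ k * M k * s ^ k * ((A * s) ^ l * M l) := by ring

lemma le_mul_hFun_of_pow_le (hM : ∀ j, 0 < M j) (hA1 : 1 ≤ A) {m : ℕ} (hm : m ≠ 0)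
    {t x C : ℝ} (ht : 0 < t) (hC : 1 ≤ C) (hle : x ^ m ≤ C * hFun M t) :
    x ≤ C * hFun M (A ^ m * t) := by
  obtain ⟨m, rfl⟩ := Nat.exists_eq_succ_of_ne_zero hm
  have hA0 : 0 < A := one_pos.trans_le hA1
  refine le_mul_hFun (by positivity) (by positivity) fun l => ?_
  have := hM l
  refine le_of_pow_le_pow_left₀ hm (by positivity) ?_
  calc x ^ (m + 1) ≤ C * hFun M t := hle
    _ ≤ C ^ (m + 1) * (t ^ ((m + 1) * l) * M ((m + 1) * l)) :=
        mul_le_mul (le_self_pow₀ hC hm) (hFun_le_pow_mul hM ht _)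
          (hFun_nonneg hM ht.le) (by positivity)
    _ ≤ C ^ (m + 1) * (t ^ ((m + 1) * l) * (A ^ ((m + 1) * (m + 1) * l) * M l ^ (m + 1))) := by
        gcongr
        exact le_pow_mul_pow_of_moderateGrowth hA hM hA1 m l
    _ = (C * ((A ^ (m + 1) * t) ^ l * M l)) ^ (m + 1) := by ring

lemma le_mul_hFun_of_pow_mul_pow_le (hM : ∀ j, 0 < M j) (hA1 : 1 ≤ A) {m k : ℕ} (hm : m ≠ 0)
    {x t c C σ : ℝ} (ht : 0 < t) (hc : 0 < c) (hC : 0 ≤ C) (hσ : 0 < σ)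
    (h : x ^ m * (c * t ^ k) ≤ C * hFun M (σ * t)) :
    x ≤ max 1 (C * A ^ k * M k * σ ^ k / c) * hFun M (A ^ m * (A * σ) * t) := by
  have hA0 : 0 < A := one_pos.trans_le hA1
  have := hM k
  have hpow : x ^ m ≤ C * A ^ k * M k * σ ^ k / c * hFun M (A * σ * t) := by
    rw [div_mul_eq_mul_div, le_div_iff₀ hc, ← mul_le_mul_iff_left₀ (pow_pos ht k)]
    calc x ^ m * c * t ^ k = x ^ m * (c * t ^ k) := by ring
      _ ≤ C * hFun M (σ * t) := h
      _ ≤ C * (A ^ k * M k * (σ * t) ^ k * hFun M (A * (σ * t))) :=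
          mul_le_mul_of_nonneg_left (hFun_le_mul_hFun hA hM hA0 (by positivity) k) hC
      _ = C * A ^ k * M k * σ ^ k * hFun M (A * σ * t) * t ^ k := by ring_nf
  rw [mul_assoc (A ^ m)]
  exact le_mul_hFun_of_pow_le hA hM hA1 hm (by positivity) (le_max_left _ _)
    (hpow.trans (mul_le_mul_of_nonneg_right (le_max_right _ _)
      (hFun_nonneg hM (by positivity))))

end ModerateGrowth

end hFun

section Polynomial

variable {R : Type*} {d : ℕ}

/-- `monicCoeff a j` is the coefficient of `X ^ j` in `X ^ d + ∑ i, a i * X ^ (d - 1 - i)`. -/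
def monicCoeff [One R] (a : Fin d → R) (j : ℕ) : R :=
  if hj : j < d then a (Fin.rev ⟨j, hj⟩) else 1

lemma monicCoeff_of_lt [One R] (a : Fin d → R) {j : ℕ} (hj : j < d) :
    monicCoeff a j = a (Fin.rev ⟨j, hj⟩) :=
  dif_pos hj

lemma monicCoeff_of_le [One R] (a : Fin d → R) {j : ℕ} (hj : d ≤ j) : monicCoeff a j = 1 :=
  dif_neg hj.not_gt

lemma monicCoeff_apply {α : Type*} [One R] (a : Fin d → α → R) (j : ℕ) (x : α) :
    monicCoeff a j x = monicCoeff (fun i => a i x) j := by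
  unfold monicCoeff
  split_ifs <;> rfl

variable [CommSemiring R]

lemma pow_add_sum_eq_sum_monicCoeff (a : Fin d → R) (w : R) :
    w ^ d + ∑ i : Fin d, a i * w ^ (d - 1 - (i : ℕ)) =
      ∑ j ∈ Finset.range (d + 1), monicCoeff a j * w ^ j := by
  rw [Finset.sum_range_succ, monicCoeff_of_le a le_rfl, one_mul, add_comm,
    ← Fin.sum_univ_eq_sum_range (fun j => monicCoeff a j * w ^ j), ← Equiv.sum_comp Fin.revPerm]
  refine congrArg₂ _ (Finset.sum_congr rfl fun i _ => ?_) rfl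
  simp only [Fin.revPerm_apply, monicCoeff, Fin.is_lt, dif_pos, Fin.eta, Fin.val_rev]
  congr 2
  omega

lemma sum_range_add_mul_pow (c : ℕ → R) (w : R) (m n : ℕ) :
    ∑ j ∈ Finset.range (m + (n + 1)), c j * w ^ j = ∑ j ∈ Finset.range m, c j * w ^ j +
      w ^ m * (c m + w * ∑ i ∈ Finset.range n, c (m + 1 + i) * w ^ i) := by
  rw [Finset.sum_range_add, Finset.sum_range_succ', mul_add, Finset.mul_sum, Finset.mul_sum,
    add_comm (w ^ m * c m)]
  congr 2
  · refine Finset.sum_congr rfl fun i _ => ?_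
    rw [show m + (i + 1) = m + 1 + i by ring, pow_add, pow_succ]
    ring
  · simp [mul_comm]

end Polynomial

lemma norm_pow_mul_le_of_sum_add_pow_mul_eq_zero {𝕜 : Type*} [NormedField 𝕜] {c : ℕ → 𝕜}
    {w t : 𝕜} {m : ℕ} {ε : ℝ}
    (h0 : ∑ j ∈ Finset.range m, c j * w ^ j + w ^ m * t = 0) (hw : ‖w‖ ≤ 1)
    (hc : ∀ j < m, ‖c j‖ ≤ ε) : ‖w‖ ^ m * ‖t‖ ≤ m * ε := by
  rw [← norm_pow, ← norm_mul, eq_neg_of_add_eq_zero_right h0, norm_neg]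
  calc ‖∑ j ∈ Finset.range m, c j * w ^ j‖ ≤ ∑ j ∈ Finset.range m, ‖c j * w ^ j‖ :=
        norm_sum_le _ _
    _ ≤ ∑ _j ∈ Finset.range m, ε := Finset.sum_le_sum fun j hj => by
        rw [norm_mul, norm_pow]
        exact (mul_le_of_le_one_right (norm_nonneg _) (pow_le_one₀ (norm_nonneg _) hw)).trans
          (hc j (Finset.mem_range.1 hj))
    _ = m * ε := by simp

lemma eventually_le_norm_add_of_isLittleO {α E F : Type*} [NormedAddCommGroup E] [Norm F]
    {l : Filter α} {f e : α → E} {g : α → F} {c : ℝ} (hc : 0 < c)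
    (hf : ∀ᶠ x in l, c * ‖g x‖ ≤ ‖f x‖) (he : e =o[l] g) :
    ∀ᶠ x in l, c / 2 * ‖g x‖ ≤ ‖f x + e x‖ := by
  filter_upwards [hf, he.def (half_pos hc)] with x hfx hex
  have := norm_sub_le (f x + e x) (e x)
  rw [add_sub_cancel_right] at this
  linarith

lemma differentiableOn_iteratedDeriv_of_isOpen {U : Set ℂ} (hU : IsOpen U) {f : ℂ → ℂ}
    (hf : DifferentiableOn ℂ f U) (n : ℕ) : DifferentiableOn ℂ (iteratedDeriv n f) U := by
  rw [iteratedDeriv_eq_iterate]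
  exact ((hf.analyticOnNhd hU).iterated_deriv n).differentiableOn

lemma norm_le_add_of_norm_deriv_le_mul_pow {E : Type*} [NormedAddCommGroup E] [NormedSpace ℝ E]
    {φ φ' : ℝ → E} {ε K : ℝ} {q : ℕ} (hε : ε ≤ 1)
    (hφ : ∀ t ∈ Icc ε 1, HasDerivAt φ (φ' t) t) (hφ' : ∀ t ∈ Icc ε 1, ‖φ' t‖ ≤ K * t ^ q) :
    ‖φ 1‖ ≤ ‖φ ε‖ + K * (1 - ε ^ (q + 1)) / (q + 1) := by
  have hB : ∀ t, HasDerivAt (fun t => ‖φ ε‖ + K * (t ^ (q + 1) - ε ^ (q + 1)) / (q + 1))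
      (K * t ^ q) t := fun t => by
    refine ((((hasDerivAt_pow (q + 1) t).sub_const (ε ^ (q + 1))).const_mul K).div_const
      ((q : ℝ) + 1) |>.const_add ‖φ ε‖).congr_deriv ?_
    field_simp
    push_cast
    ring
  simpa using image_norm_le_of_norm_deriv_right_le_deriv_boundary
    (fun t ht => (hφ t ht).continuousAt.continuousWithinAt)
    (fun t ht => (hφ t (Ico_subset_Icc_self ht)).hasDerivWithinAt) (by simp) hB
    (fun t ht => hφ' t (Ico_subset_Icc_self ht)) (right_mem_Icc.2 hε)

lemma tendsto_ofReal_mul_nhdsWithin_zero {U : Set ℂ} {z : ℂ}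
    (hz : ∀ t ∈ Ioc (0 : ℝ) 1, (t : ℂ) * z ∈ U) :
    Tendsto (fun t : ℝ => (t : ℂ) * z) (𝓝[>] 0) (𝓝[U] 0) := by
  refine tendsto_nhdsWithin_iff.2 ⟨?_, ?_⟩
  · have := ((continuous_ofReal.mul continuous_const).tendsto' 0 _ (by simp) :
      Tendsto (fun t : ℝ => (t : ℂ) * z) (𝓝 0) (𝓝 0))
    exact this.mono_left nhdsWithin_le_nhds
  · filter_upwards [Ioc_mem_nhdsGT zero_lt_one] with t ht using hz t ht

section StarShaped

variable {U : Set ℂ} (hU : IsOpen U) (hstar : ∀ z ∈ U, ∀ t ∈ Ioc (0 : ℝ) 1, (t : ℂ) * z ∈ U)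
include hU hstar

lemma norm_le_of_norm_deriv_le_mul_pow {g : ℂ → ℂ} (hg : DifferentiableOn ℂ g U)
    (hg0 : Tendsto g (𝓝[U] 0) (𝓝 0)) {c : ℝ} {q : ℕ} (hc : ∀ w ∈ U, ‖deriv g w‖ ≤ c * ‖w‖ ^ q)
    {z : ℂ} (hz : z ∈ U) : ‖g z‖ ≤ c * ‖z‖ ^ (q + 1) / (q + 1) := by
  -- integrate along the segment `[ε z, z]` and let `ε → 0`
  have hsegment : ∀ ε ∈ Ioc (0 : ℝ) 1,
      ‖g z‖ ≤ ‖g (ε * z)‖ + c * ‖z‖ ^ (q + 1) * (1 - ε ^ (q + 1)) / (q + 1) := by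
    intro ε hε
    have hsub : Icc ε 1 ⊆ Ioc 0 1 := Icc_subset_Ioc_iff hε.2 |>.2 ⟨hε.1, le_rfl⟩
    simpa using norm_le_add_of_norm_deriv_le_mul_pow (φ := fun s : ℝ => g (s * z)) hε.2
      (fun t ht => (((hg.differentiableAt (hU.mem_nhds (hstar z hz t (hsub ht)))).hasDerivAt).comp
        (t : ℂ) (hasDerivAt_mul_const z)).comp_ofReal)
      (fun t ht => calc
        ‖deriv g (t * z) * z‖ ≤ c * ‖(t : ℂ) * z‖ ^ q * ‖z‖ := by
          rw [norm_mul]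
          gcongr
          exact hc _ (hstar z hz t (hsub ht))
        _ = c * ‖z‖ ^ (q + 1) * t ^ q := by
          rw [norm_mul, norm_real, Real.norm_of_nonneg (hsub ht).1.le]
          ring)
  have hlim : Tendsto (fun ε : ℝ => ‖g (ε * z)‖ + c * ‖z‖ ^ (q + 1) * (1 - ε ^ (q + 1)) / (q + 1))
      (𝓝[>] 0) (𝓝 (‖(0 : ℂ)‖ + c * ‖z‖ ^ (q + 1) * (1 - 0 ^ (q + 1)) / (q + 1))) := by
    refine ((hg0.comp (tendsto_ofReal_mul_nhdsWithin_zero (hstar z hz))).norm).add ?_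
    exact ((((continuous_pow (q + 1)).tendsto 0).const_sub _).const_mul _).div_const _
      |>.mono_left nhdsWithin_le_nhds
  simpa using ge_of_tendsto hlim
    (by filter_upwards [Ioc_mem_nhdsGT zero_lt_one] with ε hε using hsegment ε hε)

theorem norm_le_of_tendsto_iteratedDeriv {n : ℕ} {f : ℂ → ℂ} {B : ℝ} (hf : DifferentiableOn ℂ f U)
    (hflat : ∀ p < n, Tendsto (iteratedDeriv p f) (𝓝[U] 0) (𝓝 0))
    (hB : ∀ z ∈ U, ‖iteratedDeriv n f z‖ ≤ B) {z : ℂ} (hz : z ∈ U) :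
    ‖f z‖ ≤ B * ‖z‖ ^ n / n.factorial := by
  induction n generalizing f B z with
  | zero => simpa using hB z hz
  | succ n ih =>
    have hflat' : ∀ p < n, Tendsto (iteratedDeriv p (deriv f)) (𝓝[U] 0) (𝓝 0) := fun p hp => by
      simpa only [← iteratedDeriv_succ'] using hflat (p + 1) (by omega)
    have hB' : ∀ w ∈ U, ‖iteratedDeriv n (deriv f) w‖ ≤ B := by
      simpa only [← iteratedDeriv_succ'] using hB
    have := norm_le_of_norm_deriv_le_mul_pow hU hstar hf (by simpa using hflat 0 (by omega))
      (c := B / n.factorial) (fun w hw => (ih (hf.deriv hU) hflat' hB' hw).trans_eq (by ring)) hz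
    rw [Nat.factorial_succ]
    push_cast
    convert this using 1
    field_simp

end StarShaped

lemma norm_sub_le_of_hasDerivAt_path {U : Set ℂ} (hU : IsOpen U) {f : ℂ → ℂ}
    (hf : DifferentiableOn ℂ f U) {B : ℝ} (hB : ∀ w ∈ U, ‖deriv f w‖ ≤ B) {u u' : ℝ → ℂ}
    (hu : ∀ τ ∈ Icc (0 : ℝ) 1, HasDerivAt u (u' τ) τ) (huU : ∀ τ ∈ Icc (0 : ℝ) 1, u τ ∈ U)
    {L : ℝ} (hL : ∀ τ ∈ Icc (0 : ℝ) 1, ‖u' τ‖ ≤ L) : ‖f (u 1) - f (u 0)‖ ≤ B * L := by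
  have hderiv : ∀ τ ∈ Icc (0 : ℝ) 1,
      HasDerivWithinAt (f ∘ u) (deriv f (u τ) * u' τ) (Icc 0 1) τ := fun τ hτ =>
    ((hf.differentiableAt (hU.mem_nhds (huU τ hτ))).hasDerivAt.comp τ (hu τ hτ)).hasDerivWithinAt
  have hbound : ∀ τ ∈ Icc (0 : ℝ) 1, ‖deriv f (u τ) * u' τ‖ ≤ B * L := fun τ hτ => by
    rw [norm_mul]
    exact mul_le_mul (hB _ (huU τ hτ)) (hL τ hτ) (norm_nonneg _)
      ((norm_nonneg _).trans (hB _ (huU τ hτ)))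
  simpa using Convex.norm_image_sub_le_of_norm_hasDerivWithin_le hderiv hbound (convex_Icc 0 1)
    (left_mem_Icc.2 zero_le_one) (right_mem_Icc.2 zero_le_one)

-- Unlike the segment `[w, z]`, this path stays in the sector also when `γ > 1` (non-convex case).
def polarPath (z w : ℂ) (τ : ℝ) : ℂ :=
  (((1 - τ) * ‖w‖ + τ * ‖z‖ : ℝ) : ℂ) * exp ((((1 - τ) * arg w + τ * arg z : ℝ) : ℂ) * I)

lemma polarPath_zero (z w : ℂ) : polarPath z w 0 = w := by
  simp [polarPath, norm_mul_exp_arg_mul_I]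

lemma polarPath_one (z w : ℂ) : polarPath z w 1 = z := by
  simp [polarPath, norm_mul_exp_arg_mul_I]

lemma hasDerivAt_polarPath (z w : ℂ) (τ : ℝ) :
    HasDerivAt (polarPath z w) ((((‖z‖ - ‖w‖ : ℝ) : ℂ) + (((1 - τ) * ‖w‖ + τ * ‖z‖ : ℝ) : ℂ) *
      ((arg z - arg w : ℝ) : ℂ) * I) * exp ((((1 - τ) * arg w + τ * arg z : ℝ) : ℂ) * I)) τ := by
  have hlin : ∀ p q : ℝ, HasDerivAt (fun s : ℝ => (((1 - s) * p + s * q : ℝ) : ℂ))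
      ((q - p : ℝ) : ℂ) τ := fun p q => by
    have : (fun s : ℝ => (1 - s) * p + s * q) = fun s => p + s * (q - p) := by
      ext
      ring
    refine HasDerivAt.ofReal_comp ?_
    rw [this]
    simpa using ((hasDerivAt_id τ).mul_const (q - p)).const_add p
  exact ((hlin _ _).mul (((hlin _ _).mul_const I).cexp)).congr_deriv (by ring)

section Sector

variable {γ : ℝ} {r : ℝ≥0∞} {M : ℕ → ℝ} {f : ℂ → ℂ}

lemma mem_sector_iff {z : ℂ} :
    z ∈ Sector γ r ↔ z ≠ 0 ∧ |arg z| < γ * Real.pi / 2 ∧ ENNReal.ofReal ‖z‖ < r := by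
  rw [ofReal_norm, enorm_eq_nnnorm]
  rfl

lemma isOpen_sector (hγ2 : γ < 2) : IsOpen (Sector γ r) := by
  have hsector : Sector γ r = (slitPlane ∩ (fun z => |arg z|) ⁻¹' Iio (γ * Real.pi / 2)) ∩
      (fun z : ℂ => (‖z‖₊ : ℝ≥0∞)) ⁻¹' Iio r := by
    ext z
    simp only [Sector, mem_inter_iff, mem_preimage, mem_Iio, mem_slitPlane_iff_arg]
    constructor
    · rintro ⟨hz, harg, hr⟩
      refine ⟨⟨⟨fun hπ => ?_, hz⟩, harg⟩, hr⟩
      rw [hπ, abs_of_pos Real.pi_pos] at harg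
      nlinarith [Real.pi_pos]
    · rintro ⟨⟨⟨-, hz⟩, harg⟩, hr⟩
      exact ⟨hz, harg, hr⟩
  rw [hsector]
  exact (continuousOn_arg.abs.isOpen_inter_preimage isOpen_slitPlane isOpen_Iio).inter
    (isOpen_Iio.preimage (ENNReal.continuous_coe.comp continuous_nnnorm))

lemma ofReal_mul_mem_sector {z : ℂ} (hz : z ∈ Sector γ r) {t : ℝ} (ht : t ∈ Ioc 0 1) :
    (t : ℂ) * z ∈ Sector γ r := by
  rw [mem_sector_iff] at hz ⊢
  obtain ⟨hz0, harg, hr⟩ := hz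
  refine ⟨mul_ne_zero (ofReal_ne_zero.2 ht.1.ne') hz0, by rwa [arg_real_mul z ht.1], ?_⟩
  refine lt_of_le_of_lt (ENNReal.ofReal_le_ofReal ?_) hr
  rw [norm_mul, norm_real, Real.norm_of_nonneg ht.1.le]
  exact mul_le_of_le_one_left (norm_nonneg z) ht.2

lemma polar_mem_sector (hγ2 : γ < 2) {ρ θ : ℝ} (hρ : 0 < ρ) (hθ : |θ| < γ * Real.pi / 2)
    (hρr : ENNReal.ofReal ρ < r) : (ρ : ℂ) * exp (θ * I) ∈ Sector γ r := by
  have hθπ : θ ∈ Ioc (-Real.pi) Real.pi := by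
    have := abs_lt.1 (hθ.trans_le (by nlinarith [Real.pi_pos] : γ * Real.pi / 2 ≤ Real.pi))
    exact ⟨this.1, this.2.le⟩
  have harg : arg (exp (θ * I)) = θ := by rw [exp_mul_I, arg_cos_add_sin_mul_I hθπ]
  rw [mem_sector_iff, arg_real_mul _ hρ, harg, norm_mul, norm_exp_ofReal_mul_I, norm_real,
    Real.norm_of_nonneg hρ.le, mul_one]
  exact ⟨mul_ne_zero (ofReal_ne_zero.2 hρ.ne') (exp_ne_zero _), hθ, hρr⟩

lemma ofReal_mem_sector (hγ0 : 0 < γ) {ρ : ℝ} (hρ : 0 < ρ) (hρr : ENNReal.ofReal ρ < r) :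
    (ρ : ℂ) ∈ Sector γ r := by
  rw [mem_sector_iff, arg_ofReal_of_nonneg hρ.le, norm_real, Real.norm_of_nonneg hρ.le]
  exact ⟨ofReal_ne_zero.2 hρ.ne', by rw [abs_zero]; positivity, hρr⟩

lemma sector_nonempty (hγ0 : 0 < γ) (hr0 : 0 < r) : (Sector γ r).Nonempty := by
  obtain ⟨ρ, -, hρ0, hρr⟩ := ENNReal.lt_iff_exists_real_btwn.1 hr0
  exact ⟨ρ, ofReal_mem_sector hγ0 (ENNReal.ofReal_pos.1 hρ0) hρr⟩

lemma sector_mono {r' : ℝ≥0∞} (h : r' ≤ r) : Sector γ r' ⊆ Sector γ r :=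
  fun _ hz => ⟨hz.1, hz.2.1, hz.2.2.trans_le h⟩

lemma nhdsWithin_sector_neBot (hγ0 : 0 < γ) (hr0 : 0 < r) : (𝓝[Sector γ r] 0).NeBot := by
  obtain ⟨z, hz⟩ := sector_nonempty hγ0 hr0
  exact (tendsto_ofReal_mul_nhdsWithin_zero fun t ht => ofReal_mul_mem_sector hz ht).neBot

lemma exists_sector_forall_of_eventually (hr0 : 0 < r) {P : ℂ → Prop}
    (h : ∀ᶠ z in 𝓝[Sector γ r] 0, P z) : ∃ r' : ℝ≥0∞, 0 < r' ∧ r' ≤ r ∧ ∀ z ∈ Sector γ r', P z := by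
  obtain ⟨ε, hε, hP⟩ := Metric.eventually_nhds_iff.1 (eventually_nhdsWithin_iff.1 h)
  refine ⟨min r (ENNReal.ofReal ε), lt_min hr0 (ENNReal.ofReal_pos.2 hε), min_le_left _ _,
    fun z hz => hP ?_ (sector_mono (min_le_left _ _) hz)⟩
  have := (mem_sector_iff.1 hz).2.2.trans_le (min_le_right _ _)
  rw [dist_zero_right]
  exact (ENNReal.ofReal_lt_ofReal_iff hε).1 this

lemma polarPath_mem_sector (hγ2 : γ < 2) {z w : ℂ} (hz : z ∈ Sector γ r) (hw : w ∈ Sector γ r)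
    {τ : ℝ} (hτ : τ ∈ Icc (0 : ℝ) 1) : polarPath z w τ ∈ Sector γ r := by
  obtain ⟨hz0, hzarg, hzr⟩ := mem_sector_iff.1 hz
  obtain ⟨hw0, hwarg, hwr⟩ := mem_sector_iff.1 hw
  have h1τ : 0 ≤ 1 - τ := sub_nonneg.2 hτ.2
  have hconv : ∀ {x y b : ℝ}, x < b → y < b → (1 - τ) * x + τ * y < b := fun hx hy => by
    rcases hτ.1.eq_or_lt with rfl | hτ0
    · simpa using hx
    · nlinarith
  refine polar_mem_sector hγ2 ?_ ?_ ?_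
  · have := hconv (neg_lt_zero.2 (norm_pos_iff.2 hw0)) (neg_lt_zero.2 (norm_pos_iff.2 hz0))
    linarith
  · refine ((abs_add_le _ _).trans_eq ?_).trans_lt (hconv hwarg hzarg)
    rw [abs_mul, abs_mul, abs_of_nonneg h1τ, abs_of_nonneg hτ.1]
  · rcases le_total ‖z‖ ‖w‖ with h | h
    · refine (ENNReal.ofReal_le_ofReal ?_).trans_lt hwr
      nlinarith [mul_nonneg hτ.1 (sub_nonneg.2 h)]
    · refine (ENNReal.ofReal_le_ofReal ?_).trans_lt hzr
      nlinarith [mul_nonneg h1τ (sub_nonneg.2 h)]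

lemma norm_sub_le_of_norm_deriv_le_on_sector (hγ2 : γ < 2)
    (hf : DifferentiableOn ℂ f (Sector γ r)) {B : ℝ} (hB : ∀ w ∈ Sector γ r, ‖deriv f w‖ ≤ B)
    {z w : ℂ} (hz : z ∈ Sector γ r) (hw : w ∈ Sector γ r) :
    ‖f z - f w‖ ≤ B * ((1 + 2 * Real.pi) * (‖z‖ + ‖w‖)) := by
  have hbound : ∀ τ ∈ Icc (0 : ℝ) 1, ‖(((‖z‖ - ‖w‖ : ℝ) : ℂ) + (((1 - τ) * ‖w‖ + τ * ‖z‖ : ℝ) : ℂ) *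
      ((arg z - arg w : ℝ) : ℂ) * I) * exp ((((1 - τ) * arg w + τ * arg z : ℝ) : ℂ) * I)‖ ≤
      (1 + 2 * Real.pi) * (‖z‖ + ‖w‖) := by
    intro τ hτ
    have hmod : |‖z‖ - ‖w‖| ≤ ‖z‖ + ‖w‖ := by
      simpa only [abs_norm] using abs_sub (‖z‖) (‖w‖)
    have hρ : |(1 - τ) * ‖w‖ + τ * ‖z‖| ≤ ‖z‖ + ‖w‖ := by
      rw [abs_of_nonneg (by have := hτ.1; have := sub_nonneg.2 hτ.2; positivity)]
      nlinarith [hτ.1, hτ.2, norm_nonneg z, norm_nonneg w]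
    have harg : |arg z - arg w| ≤ 2 * Real.pi := by
      linarith [abs_sub (arg z) (arg w), abs_arg_le_pi z, abs_arg_le_pi w]
    rw [norm_mul, norm_exp_ofReal_mul_I, mul_one]
    refine (norm_add_le _ _).trans ?_
    rw [norm_mul, norm_mul, norm_real, norm_real, norm_real, norm_I, mul_one]
    simp only [Real.norm_eq_abs]
    nlinarith [mul_le_mul hρ harg (abs_nonneg _) (by positivity)]
  simpa [polarPath_one, polarPath_zero] using norm_sub_le_of_hasDerivAt_path (isOpen_sector hγ2)
    hf hB (fun τ _ => hasDerivAt_polarPath z w τ) (fun τ hτ => polarPath_mem_sector hγ2 hz hw hτ)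
    hbound

lemma exists_tendsto_nhdsWithin_sector (hγ0 : 0 < γ) (hγ2 : γ < 2) (hr0 : 0 < r)
    (hf : DifferentiableOn ℂ f (Sector γ r)) {B : ℝ}
    (hB : ∀ w ∈ Sector γ r, ‖deriv f w‖ ≤ B) : ∃ α, Tendsto f (𝓝[Sector γ r] 0) (𝓝 α) := by
  have := nhdsWithin_sector_neBot hγ0 hr0
  refine cauchy_map_iff_exists_tendsto.1 (cauchy_map_iff'.2 ?_)
  rw [Metric.uniformity_eq_comap_nhds_zero, tendsto_comap_iff]
  set K := B * (1 + 2 * Real.pi)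
  have hK : Tendsto (fun p : ℂ × ℂ => K * (‖p.1‖ + ‖p.2‖))
      (𝓝[Sector γ r] 0 ×ˢ 𝓝[Sector γ r] 0) (𝓝 0) := by
    have : Continuous (fun p : ℂ × ℂ => K * (‖p.1‖ + ‖p.2‖)) := by fun_prop
    simpa using (this.tendsto (0, 0)).mono_left
      (nhds_prod_eq (x := (0 : ℂ)) (y := (0 : ℂ)) ▸ prod_mono nhdsWithin_le_nhds nhdsWithin_le_nhds)
  refine squeeze_zero' (Eventually.of_forall fun _ => dist_nonneg) ?_ hK
  filter_upwards [prod_mem_prod self_mem_nhdsWithin self_mem_nhdsWithin] with p hp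
  rw [Function.comp_apply, dist_eq_norm]
  exact (norm_sub_le_of_norm_deriv_le_on_sector hγ2 hf hB hp.1 hp.2).trans_eq (by ring)

lemma AInfty.isBigO_one (hf : AInfty γ r f) : f =O[𝓝[Sector γ r] 0] (fun _ => (1 : ℂ)) := by
  obtain ⟨B, hB⟩ := hf.2 0
  exact IsBigO.of_bound B (eventually_nhdsWithin_of_forall fun z hz => by simpa using hB z hz)

lemma AInfty.const (c : ℂ) : AInfty γ r (fun _ => c) := by
  refine ⟨differentiableOn_const c, fun n => ⟨‖c‖, fun z _ => ?_⟩⟩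
  rw [iteratedDeriv_const]
  split_ifs <;> simp

lemma FlatOn.isBigO_pow (hγ2 : γ < 2) (hf : AInfty γ r f) (hflat : FlatOn γ r f) (n : ℕ) :
    f =O[𝓝[Sector γ r] 0] (· ^ n) := by
  obtain ⟨B, hB⟩ := hf.2 n
  refine IsBigO.of_bound (B / n.factorial) (eventually_nhdsWithin_of_forall fun z hz => ?_)
  refine (norm_le_of_tendsto_iteratedDeriv (isOpen_sector hγ2)
    (fun _ hw _ ht => ofReal_mul_mem_sector hw ht) hf.1 (fun p _ => hflat p) hB hz).trans_eq ?_
  rw [norm_pow]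
  ring

lemma not_flatOn_one (hγ0 : 0 < γ) (hr0 : 0 < r) : ¬ FlatOn γ r 1 := fun h1 => by
  have := nhdsWithin_sector_neBot hγ0 hr0
  have h0 := h1 0
  rw [iteratedDeriv_zero, Pi.one_def, tendsto_const_nhds_iff] at h0
  exact one_ne_zero h0

lemma AInfty.exists_tendsto_iteratedDeriv_ne_zero (hγ0 : 0 < γ) (hγ2 : γ < 2) (hr0 : 0 < r)
    (hf : AInfty γ r f) (hnf : ¬ FlatOn γ r f) :
    ∃ k : ℕ, ∃ α ≠ 0, (∀ p < k, Tendsto (iteratedDeriv p f) (𝓝[Sector γ r] 0) (𝓝 0)) ∧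
      Tendsto (iteratedDeriv k f) (𝓝[Sector γ r] 0) (𝓝 α) := by
  classical
  have hex : ∃ j, ¬ Tendsto (iteratedDeriv j f) (𝓝[Sector γ r] 0) (𝓝 0) := by
    simpa [FlatOn] using hnf
  obtain ⟨B, hB⟩ := hf.2 (Nat.find hex + 1)
  obtain ⟨α, hα⟩ := exists_tendsto_nhdsWithin_sector hγ0 hγ2 hr0
    (differentiableOn_iteratedDeriv_of_isOpen (isOpen_sector hγ2) hf.1 (Nat.find hex)) (B := B)
    (by simpa only [← iteratedDeriv_succ] using hB)
  refine ⟨Nat.find hex, α, ?_, fun p hp => not_not.1 (Nat.find_min hex hp), hα⟩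
  rintro rfl
  exact Nat.find_spec hex hα

theorem AInfty.isLittleO_sub_monomial (hγ2 : γ < 2) (hf : AInfty γ r f) {k : ℕ} {α : ℂ}
    (hlow : ∀ p < k, Tendsto (iteratedDeriv p f) (𝓝[Sector γ r] 0) (𝓝 0))
    (hk : Tendsto (iteratedDeriv k f) (𝓝[Sector γ r] 0) (𝓝 α)) :
    (fun z => f z - α / k.factorial * z ^ k) =o[𝓝[Sector γ r] 0] (· ^ k) := by
  have hS := isOpen_sector (r := r) hγ2
  set q : ℂ → ℂ := fun z => α / k.factorial * z ^ k
  have hq : ContDiff ℂ ⊤ q := contDiff_const.mul (contDiff_id.pow k)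
  have hderiv_sub : ∀ p, ∀ z ∈ Sector γ r,
      iteratedDeriv p (fun z => f z - q z) z = iteratedDeriv p f z - iteratedDeriv p q z :=
    fun p z hz => iteratedDeriv_fun_sub ((hf.1.contDiffOn hS).contDiffAt (hS.mem_nhds hz))
      (hq.of_le le_top).contDiffAt
  have hqk : ∀ p,
      iteratedDeriv p q = fun z => α / k.factorial * (k.descFactorial p * z ^ (k - p)) :=
    fun p => funext fun z => by simp only [q, iteratedDeriv_const_mul_field, iteratedDeriv_pow]
  have hflat : ∀ p < k + 1,
      Tendsto (iteratedDeriv p (fun z => f z - q z)) (𝓝[Sector γ r] 0) (𝓝 0) := by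
    intro p hp
    have hlim : Tendsto (iteratedDeriv p f) (𝓝[Sector γ r] 0) (𝓝 (iteratedDeriv p q 0)) := by
      rcases (Nat.lt_succ_iff.1 hp).lt_or_eq with hpk | rfl
      · simpa [hqk, zero_pow (Nat.sub_ne_zero_of_lt hpk)] using hlow p hpk
      · have hk0 : (p.factorial : ℂ) ≠ 0 := Nat.cast_ne_zero.2 p.factorial_ne_zero
        simpa [hqk, Nat.descFactorial_self, div_mul_cancel₀ _ hk0] using hk
    have hqlim := ((hq.continuous_iteratedDeriv p (by simp)).tendsto 0).mono_left
      (nhdsWithin_le_nhds (s := Sector γ r))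
    refine (tendsto_congr' (eventually_nhdsWithin_of_forall (hderiv_sub p))).2 ?_
    simpa using hlim.sub hqlim
  obtain ⟨B, hB⟩ := hf.2 (k + 1)
  have hE : ∀ z ∈ Sector γ r,
      ‖iteratedDeriv (k + 1) (fun z => f z - q z) z‖ ≤ B := fun z hz => by
    simpa [hderiv_sub _ z hz, hqk, Nat.descFactorial_of_lt (Nat.lt_succ_self k)] using hB z hz
  refine (IsBigO.of_bound (B / (k + 1).factorial) (eventually_nhdsWithin_of_forall
    fun z hz => ?_)).trans_isLittleO ((isLittleO_pow_pow k.lt_succ_self).mono nhdsWithin_le_nhds)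
  refine (norm_le_of_tendsto_iteratedDeriv hS (fun _ hw _ ht => ofReal_mul_mem_sector hw ht)
    (hf.1.sub (hq.differentiable (by simp)).differentiableOn) hflat hE hz).trans_eq ?_
  rw [norm_pow, pow_succ]
  ring

theorem AInfty.exists_pow_le_norm (hγ0 : 0 < γ) (hγ2 : γ < 2) (hr0 : 0 < r) (hf : AInfty γ r f)
    (hnf : ¬ FlatOn γ r f) : ∃ k : ℕ, ∃ c > 0, ∀ᶠ z in 𝓝[Sector γ r] 0, c * ‖z ^ k‖ ≤ ‖f z‖ := by
  obtain ⟨k, α, hα, hlow, hk⟩ := hf.exists_tendsto_iteratedDeriv_ne_zero hγ0 hγ2 hr0 hnf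
  refine ⟨k, ‖α‖ / k.factorial / 2, by positivity, ?_⟩
  have hmonomial : ∀ z : ℂ, ‖α‖ / k.factorial * ‖z ^ k‖ ≤ ‖α / k.factorial * z ^ k‖ := by
    simp
  simpa using eventually_le_norm_add_of_isLittleO (by positivity)
    (Eventually.of_forall hmonomial) (hf.isLittleO_sub_monomial hγ2 hlow hk)

lemma FlatOn.norm_le_mul_hFun (hγ2 : γ < 2) (hf : DifferentiableOn ℂ f (Sector γ r))
    (hflat : FlatOn γ r f) {C σ : ℝ} (hC : 0 < C) (hσ : 0 < σ)
    (hbd : ∀ n : ℕ, ∀ z ∈ Sector γ r, ‖iteratedDeriv n f z‖ ≤ C * σ ^ n * n.factorial * M n)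
    {z : ℂ} (hz : z ∈ Sector γ r) : ‖f z‖ ≤ C * hFun M (σ * ‖z‖) := by
  have hz0 : 0 < ‖z‖ := norm_pos_iff.2 hz.1
  refine le_mul_hFun (by positivity) hC fun n => ?_
  refine (norm_le_of_tendsto_iteratedDeriv (isOpen_sector hγ2)
    (fun _ hw _ ht => ofReal_mul_mem_sector hw ht) hf (fun p _ => hflat p) (hbd n) hz).trans_eq ?_
  field_simp
  ring

lemma exists_bound_of_forall_lt_AClass (hM : ∀ j, 0 < M j) {N : ℕ} {c : ℕ → ℂ → ℂ}
    (hc : ∀ j < N, AClass M γ r (c j)) : ∃ C > 0, ∃ σ > 0, ∀ j < N, ∀ n : ℕ, ∀ z ∈ Sector γ r,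
      ‖iteratedDeriv n (c j) z‖ ≤ C * σ ^ n * n.factorial * M n := by
  induction N with
  | zero => exact ⟨1, one_pos, 1, one_pos, fun j hj => absurd hj (Nat.not_lt_zero j)⟩
  | succ N ih =>
    obtain ⟨C, hC, σ, hσ, hbd⟩ := ih fun j hj => hc j (by omega)
    obtain ⟨-, C', hC', σ', hσ', hbd'⟩ := hc N N.lt_succ_self
    refine ⟨max C C', lt_max_of_lt_left hC, max σ σ', lt_max_of_lt_left hσ,
      fun j hj n z hz => ?_⟩
    have hmono : ∀ {C₀ σ₀ : ℝ}, 0 < σ₀ → C₀ ≤ max C C' → σ₀ ≤ max σ σ' →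
        C₀ * σ₀ ^ n * n.factorial * M n ≤ max C C' * max σ σ' ^ n * n.factorial * M n :=
      fun hσ₀ hC₀ hσ₀' => by
        have := hM n
        gcongr
    rcases (Nat.lt_succ_iff.1 hj).lt_or_eq with hj | rfl
    · exact (hbd j hj n z hz).trans (hmono hσ (le_max_left _ _) (le_max_left _ _))
    · exact (hbd' n z hz).trans (hmono hσ' (le_max_right _ _) (le_max_right _ _))

theorem eventually_norm_pow_mul_le_of_root (hγ2 : γ < 2) {c : ℕ → ℂ → ℂ} {h : ℂ → ℂ} {m n : ℕ}
    (hc : ∀ j, AInfty γ r (c j)) (hh : AInfty γ r h) (hflat : FlatOn γ r h)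
    (hroot : ∀ z ∈ Sector γ r, ∑ j ∈ Finset.range (m + (n + 1)), c j z * h z ^ j = 0)
    {ε : ℂ → ℝ} (hsmall : ∀ j < m, ∀ z ∈ Sector γ r, ‖c j z‖ ≤ ε z) {k : ℕ} {c₀ : ℝ}
    (hc₀ : 0 < c₀) (hlow : ∀ᶠ z in 𝓝[Sector γ r] 0, c₀ * ‖z ^ k‖ ≤ ‖c m z‖) :
    ∀ᶠ z in 𝓝[Sector γ r] 0, ‖h z‖ ^ m * (c₀ / 2 * ‖z‖ ^ k) ≤ m * ε z := by
  set T := fun z => ∑ i ∈ Finset.range n, c (m + 1 + i) z * h z ^ i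
  have hT : T =O[𝓝[Sector γ r] 0] (fun _ => (1 : ℂ)) :=
    IsBigO.fun_sum fun i _ => by simpa using (hc _).isBigO_one.mul (hh.isBigO_one.pow i)
  have hhT : (fun z => h z * T z) =o[𝓝[Sector γ r] 0] (· ^ k) := by
    have := (hflat.isBigO_pow hγ2 hh (k + 1)).mul hT
    simp only [mul_one] at this
    exact this.trans_isLittleO ((isLittleO_pow_pow k.lt_succ_self).mono nhdsWithin_le_nhds)
  have hh1 : ∀ᶠ z in 𝓝[Sector γ r] 0, ‖h z‖ ≤ 1 := by
    simpa using (hflat 0).norm.eventually (ge_mem_nhds (by simp : ‖(0 : ℂ)‖ < 1))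
  filter_upwards [eventually_le_norm_add_of_isLittleO hc₀ hlow hhT, hh1, self_mem_nhdsWithin]
    with z hlowz hhz hz
  have h0 := hroot z hz
  rw [sum_range_add_mul_pow (fun j => c j z)] at h0
  rw [← norm_pow z]
  exact (mul_le_mul_of_nonneg_left hlowz (by positivity)).trans
    (norm_pow_mul_le_of_sum_add_pow_mul_eq_zero h0 hhz fun j hj => hsmall j hj z hz)

theorem exists_eventually_norm_le_mul_hFun (hγ0 : 0 < γ) (hγ2 : γ < 2) (hr0 : 0 < r)
    (hM : ∀ j, 0 < M j) {A : ℝ} (hA1 : 1 ≤ A)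
    (hA : ∀ j k : ℕ, M (j + k) ≤ A ^ (j + k) * (M j * M k)) {N : ℕ} {c : ℕ → ℂ → ℂ}
    (hc : ∀ j, AInfty γ r (c j)) (hcM : ∀ j < N, AClass M γ r (c j)) (hcN : ¬ FlatOn γ r (c N))
    {h : ℂ → ℂ} (hh : AInfty γ r h) (hflat : FlatOn γ r h)
    (hroot : ∀ z ∈ Sector γ r, ∑ j ∈ Finset.range (N + 1), c j z * h z ^ j = 0) :
    ∃ K > 0, ∃ s > 0, ∀ᶠ z in 𝓝[Sector γ r] 0, ‖h z‖ ≤ K * hFun M (s * ‖z‖) := by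
  classical
  have hex : ∃ m, ¬ FlatOn γ r (c m) := ⟨N, hcN⟩
  set m := Nat.find hex
  have hmN : m ≤ N := Nat.find_min' hex hcN
  obtain ⟨C, hC, σ, hσ, hbd⟩ := exists_bound_of_forall_lt_AClass hM hcM
  have hsmall : ∀ j < m, ∀ z ∈ Sector γ r, ‖c j z‖ ≤ C * hFun M (σ * ‖z‖) := fun j hj z hz =>
    FlatOn.norm_le_mul_hFun hγ2 (hc j).1 (not_not.1 (Nat.find_min hex hj)) hC hσ
      (hbd j (hj.trans_le hmN)) hz
  obtain ⟨k, c₀, hc₀, hlow⟩ := (hc m).exists_pow_le_norm hγ0 hγ2 hr0 (Nat.find_spec hex)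
  obtain ⟨n, hn⟩ : ∃ n, N + 1 = m + (n + 1) := ⟨N - m, by omega⟩
  have key := eventually_norm_pow_mul_le_of_root hγ2 hc hh hflat (fun z hz => hn ▸ hroot z hz)
    hsmall hc₀ hlow
  have hm : m ≠ 0 := by
    intro hm0
    have := nhdsWithin_sector_neBot hγ0 hr0
    obtain ⟨z, hz, hzS⟩ := (key.and self_mem_nhdsWithin).exists
    have : 0 < ‖z‖ := norm_pos_iff.2 hzS.1
    rw [hm0] at hz
    have : 0 < c₀ / 2 * ‖z‖ ^ k := by positivity
    simp only [pow_zero, one_mul, CharP.cast_eq_zero, zero_mul] at hz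
    linarith
  refine ⟨max 1 (m * C * A ^ k * M k * σ ^ k / (c₀ / 2)), one_pos.trans_le (le_max_left _ _),
    A ^ m * (A * σ), by positivity, ?_⟩
  filter_upwards [key, self_mem_nhdsWithin] with z hz hzS
  exact le_mul_hFun_of_pow_mul_pow_le hA hM hA1 hm (norm_pos_iff.2 hzS.1) (half_pos hc₀)
    (by positivity) hσ (hz.trans_eq (mul_assoc _ _ _).symm)

end Sector

theorem flat_root_bound_general
    (γ : ℝ) (hγ0 : 0 < γ) (hγ2 : γ < 2)
    (r : ℝ≥0∞) (hr0 : 0 < r)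
    (M : ℕ → ℝ) (hM : StronglyRegular M)
    (d : ℕ) (a : Fin d → ℂ → ℂ) (ha : ∀ i, AClass M γ r (a i))
    (h : ℂ → ℂ) (hh : AInfty γ r h) (hflat : FlatOn γ r h)
    (heq : ∀ z ∈ Sector γ r,
      h z ^ d + ∑ i : Fin d, a i z * h z ^ (d - 1 - (i : ℕ)) = 0) :
    ∃ r'' : ℝ≥0∞, 0 < r'' ∧ r'' ≤ r ∧ ∃ c₁ > (0:ℝ), ∃ c₂ > (0:ℝ),
      ∀ z ∈ Sector γ r'', ‖h z‖ ≤ c₁ * hFun M (c₂ * ‖z‖) := by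
  obtain ⟨A, hA1, hA⟩ := hM.exists_moderateGrowth
  have hc : ∀ j, AInfty γ r (monicCoeff a j) := fun j => by
    rcases lt_or_ge j d with hj | hj
    · exact monicCoeff_of_lt a hj ▸ (ha _).1
    · exact monicCoeff_of_le a hj ▸ AInfty.const 1
  obtain ⟨c₁, hc₁, c₂, hc₂, hev⟩ := exists_eventually_norm_le_mul_hFun hγ0 hγ2 hr0 hM.1 hA1 hA hc
    (fun j hj => monicCoeff_of_lt a hj ▸ ha _) (monicCoeff_of_le a le_rfl ▸ not_flatOn_one hγ0 hr0)
    hh hflat fun z hz => by simpa [monicCoeff_apply, pow_add_sum_eq_sum_monicCoeff] using heq z hz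
  obtain ⟨r'', hr''0, hr''r, hbound⟩ := exists_sector_forall_of_eventually hr0 hev
  exact ⟨r'', hr''0, hr''r, c₁, hc₁, c₂, hc₂, hbound⟩

/-- A flat root `h ∈ A^∞(S_{γ,r})` of a monic polynomial with coefficients in
`A_M(S_{γ,r})` satisfies `|h(z)| ≤ c₁·h_M(c₂·|z|)` on some smaller sector. -/
theorem flat_root_bound
    (γ : ℝ) (hγ0 : 0 < γ) (hγ2 : γ < 2)
    (r : ℝ≥0∞) (hr0 : 0 < r) (hrt : r < ⊤)
    (M : ℕ → ℝ) (hM : StronglyRegular M)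
    (d : ℕ) (hd : 1 ≤ d) (a : Fin d → ℂ → ℂ) (ha : ∀ i, AClass M γ r (a i))
    (h : ℂ → ℂ) (hh : AInfty γ r h) (hflat : FlatOn γ r h)
    (heq : ∀ z ∈ Sector γ r,
      h z ^ d + ∑ i : Fin d, a i z * h z ^ (d - 1 - (i : ℕ)) = 0) :
    ∃ r'' : ℝ≥0∞, 0 < r'' ∧ r'' ≤ r ∧ ∃ c₁ > (0:ℝ), ∃ c₂ > (0:ℝ),
      ∀ z ∈ Sector γ r'', ‖h z‖ ≤ c₁ * hFun M (c₂ * ‖z‖) :=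
  flat_root_bound_general γ hγ0 hγ2 r hr0 M hM d a ha h hh hflat heq
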